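/- Let p be an odd prime number and let G be the group Φ_6(221)a of order p^5, generated by f1, f2, f0, h1, h2 with Z(G) = ⟨h1, h2⟩ and relations [f1,f2] = f0, [f0,f1] = h1, [f0,f2] = h2, f0^p = h1^p = h2^p = 1, f1^p = h1, f2^p = h2. Then B_0(G) = 0. -/

import Mathlib

/-- The coefficient group `ℚ/ℤ`. -/
abbrev QZ : Type := ℚ ⧸ AddSubgroup.zmultiples (1 : ℚ)

/-- A (inhomogeneous) 2-cocycle on `G` with values in `ℚ/ℤ` (trivial action). -/
def IsGrpCocycle {G : Type*} [Group G] (f : G → G → QZ) : Prop :=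
  ∀ g h k : G, f g h + f (g * h) k = f h k + f g (h * k)

/-- A 2-coboundary on `G` with values in `ℚ/ℤ` (trivial action). -/
def IsGrpCoboundary {G : Type*} [Group G] (f : G → G → QZ) : Prop :=
  ∃ c : G → QZ, ∀ g h : G, f g h = c g + c h - c (g * h)

/-- The additive group of 2-cocycles. -/
def cocycles2 (G : Type*) [Group G] : AddSubgroup (G → G → QZ) where
  carrier := {f | IsGrpCocycle f}
  zero_mem' := by intro g h k; simp
  add_mem' := by
    intro a b ha hb g h k
    simp only [Pi.add_apply]
    rw [add_add_add_comm, ha g h k, hb g h k, add_add_add_comm]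
  neg_mem' := by
    intro a ha g h k
    simp only [Pi.neg_apply, ← neg_add]
    rw [ha g h k]

/-- The subgroup of 2-coboundaries inside the group of 2-cocycles. -/
def coboundaries2 (G : Type*) [Group G] : AddSubgroup (cocycles2 G) where
  carrier := {f | IsGrpCoboundary (f : G → G → QZ)}
  zero_mem' := ⟨0, by intro g h; simp⟩
  add_mem' := by
    rintro a b ⟨c, hc⟩ ⟨d, hd⟩
    refine ⟨c + d, fun g h => ?_⟩
    have : ((a + b : cocycles2 G) : G → G → QZ) g h
        = (a : G → G → QZ) g h + (b : G → G → QZ) g h := rfl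
    rw [this, hc g h, hd g h]
    simp only [Pi.add_apply]
    abel
  neg_mem' := by
    rintro a ⟨c, hc⟩
    refine ⟨-c, fun g h => ?_⟩
    have : ((-a : cocycles2 G) : G → G → QZ) g h = -((a : G → G → QZ) g h) := rfl
    rw [this, hc g h]
    simp only [Pi.neg_apply]
    abel

/-- The second cohomology group `H²(G, ℚ/ℤ)` (trivial action), as cocycles mod coboundaries. -/
abbrev H2 (G : Type*) [Group G] : Type _ := cocycles2 G ⧸ coboundaries2 G

/-- A group is bicyclic if it is cyclic or the direct product of two cyclic groups. -/
def IsBicyclic (A : Type*) [Group A] : Prop :=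
  IsCyclic A ∨ ∃ B C : Subgroup A, IsCyclic B ∧ IsCyclic C ∧ Nonempty (A ≃* B × C)

/-- The restriction of `f` to every bicyclic subgroup is a coboundary. -/
def RestrictsToCoboundaries {G : Type*} [Group G] (f : G → G → QZ) : Prop :=
  ∀ A : Subgroup G, IsBicyclic A → IsGrpCoboundary (fun a b : A => f a b)

/-- The Bogomolov multiplier `B₀(G)`: the subgroup of `H²(G, ℚ/ℤ)` consisting of the classes
whose restriction to every bicyclic subgroup of `G` vanishes. -/
def B0 (G : Type*) [Group G] : AddSubgroup (H2 G) where
  carrier := {x | ∃ f : cocycles2 G,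
    (QuotientAddGroup.mk f : H2 G) = x ∧ RestrictsToCoboundaries (f : G → G → QZ)}
  zero_mem' := by
    refine ⟨0, rfl, fun A _ => ⟨0, fun a b => ?_⟩⟩
    simp
  add_mem' := by
    rintro x y ⟨f, rfl, hf⟩ ⟨g, rfl, hg⟩
    refine ⟨f + g, rfl, fun A hA => ?_⟩
    obtain ⟨c, hc⟩ := hf A hA
    obtain ⟨d, hd⟩ := hg A hA
    refine ⟨c + d, fun a b => ?_⟩
    have hc' : (f : G → G → QZ) (a : G) (b : G) = c a + c b - c (a * b) := hc a b
    have hd' : (g : G → G → QZ) (a : G) (b : G) = d a + d b - d (a * b) := hd a b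
    show ((f + g : cocycles2 G) : G → G → QZ) (a : G) (b : G)
        = (c + d) a + (c + d) b - (c + d) (a * b)
    have : ((f + g : cocycles2 G) : G → G → QZ) (a : G) (b : G)
        = (f : G → G → QZ) (a : G) (b : G) + (g : G → G → QZ) (a : G) (b : G) := rfl
    rw [this, hc', hd']
    simp only [Pi.add_apply]
    abel
  neg_mem' := by
    rintro x ⟨f, rfl, hf⟩
    refine ⟨-f, rfl, fun A hA => ?_⟩
    obtain ⟨c, hc⟩ := hf A hA
    refine ⟨-c, fun a b => ?_⟩
    have hc' : (f : G → G → QZ) (a : G) (b : G) = c a + c b - c (a * b) := hc a b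
    show ((-f : cocycles2 G) : G → G → QZ) (a : G) (b : G)
        = (-c) a + (-c) b - (-c) (a * b)
    have : ((-f : cocycles2 G) : G → G → QZ) (a : G) (b : G)
        = -((f : G → G → QZ) (a : G) (b : G)) := rfl
    rw [this, hc']
    simp only [Pi.neg_apply]
    abel

/-- The commutator `[g,h] = g⁻¹h⁻¹gh`. -/
def cmt {G : Type*} [Group G] (g h : G) : G := g⁻¹ * h⁻¹ * g * h

/-!
Let `f` be a 2-cocycle whose restriction to every bicyclic subgroup is a coboundary, and let `E` be
the central extension of `G` by `ℚ/ℤ` defined by `f`. Since `h1` and `h2` are central of order `p`,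
each lies together with any `g` in a bicyclic subgroup, so `f (hᵢ, g) = f (g, hᵢ)` and every lift of
`hᵢ` is central in `E`. Divisibility of `ℚ/ℤ` lets us choose lifts `X, Y` of `f1, f2` with
`X ^ p = [[X, Y], X]` and `Y ^ p = [[X, Y], Y]`; for odd `p` these force all defining relations of
`G` on `X`, `Y` and their commutators. Collecting words then shows that `⟨X, Y⟩` has at most
`p ^ 5 = |G|` elements; as it maps onto `G`, it maps isomorphically, and the inverse is a
homomorphic section of `E → G`. Hence `f` is a coboundary.
-/

section Commutator

variable {K : Type*} [Group K]

lemma cmt_mul_left (u v b : K) : cmt (u * v) b = v⁻¹ * cmt u b * v * cmt v b := by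
  simp only [cmt]; group

lemma cmt_mul_right (a u v : K) : cmt a (u * v) = cmt a v * (v⁻¹ * cmt a u * v) := by
  simp only [cmt]; group

lemma mul_eq_mul_mul_cmt (a b : K) : a * b = b * a * cmt a b := by
  simp only [cmt]; group

lemma inv_mul_mul_eq_mul_cmt (c v : K) : v⁻¹ * c * v = c * cmt c v := by
  simp only [cmt]; group

lemma cmt_eq_one_of_commute {a b : K} (h : Commute a b) : cmt a b = 1 := by
  rw [cmt, mul_assoc, h.eq]; group

lemma cmt_mul_left_of_central {z : K} (hz : ∀ k, Commute z k) (a b : K) :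
    cmt (z * a) b = cmt a b := by
  simp [cmt_mul_left, cmt_eq_one_of_commute (hz b)]

lemma cmt_mul_right_of_central {z : K} (hz : ∀ k, Commute z k) (a b : K) :
    cmt a (z * b) = cmt a b := by
  simp [cmt_mul_right, cmt_eq_one_of_commute (hz a).symm]

lemma cmt_pow_right {c a : K} (hh : ∀ k, Commute (cmt c a) k) (n : ℕ) :
    cmt c (a ^ n) = cmt c a ^ n := by
  induction n with
  | zero => simp [cmt]
  | succ n ih =>
    rw [pow_succ, cmt_mul_right, ih, mul_assoc a⁻¹, ((hh a).pow_left n).eq, inv_mul_cancel_left,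
      pow_succ']

lemma cmt_pow_left {a b : K} (hh : ∀ k, Commute (cmt (cmt a b) a) k) (n : ℕ) :
    cmt (a ^ n) b = cmt a b ^ n * cmt (cmt a b) a ^ n.choose 2 := by
  set c := cmt a b
  set h := cmt c a
  induction n with
  | zero => simp [cmt]
  | succ n ih =>
    have hconj : (a ^ n)⁻¹ * c * a ^ n = c * h ^ n := by
      rw [inv_mul_mul_eq_mul_cmt, cmt_pow_right hh]
    have hchoose : (n + 1).choose 2 = n + n.choose 2 := by
      rw [Nat.choose_succ_succ, Nat.choose_one_right]
    rw [pow_succ', cmt_mul_left, ih, hconj, hchoose, pow_add, mul_assoc c,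
      ← mul_assoc (h ^ n), ((hh (c ^ n)).pow_left n).eq]
    group

lemma cmt_pow_left_of_central {a b : K} (hc : ∀ k, Commute (cmt a b) k) (n : ℕ) :
    cmt (a ^ n) b = cmt a b ^ n := by
  rw [cmt_pow_left (by simp [cmt_eq_one_of_commute (hc a)]) n,
    cmt_eq_one_of_commute (hc a), one_pow, mul_one]

lemma map_cmt {L : Type*} [Group L] (φ : K →* L) (a b : K) : φ (cmt a b) = cmt (φ a) (φ b) := by
  simp [cmt]

lemma cmt_mem {H : Subgroup K} {a b : K} (ha : a ∈ H) (hb : b ∈ H) : cmt a b ∈ H :=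
  H.mul_mem (H.mul_mem (H.mul_mem (H.inv_mem ha) (H.inv_mem hb)) ha) hb

lemma closure_pair_eq_top_of_cmt {x y F H1 H2 : K}
    (hgen : Subgroup.closure {x, y, F, H1, H2} = ⊤)
    (hF : cmt x y = F) (hH1 : cmt F x = H1) (hH2 : cmt F y = H2) :
    Subgroup.closure {x, y} = ⊤ := by
  have hx : x ∈ Subgroup.closure {x, y} := Subgroup.subset_closure (by simp)
  have hy : y ∈ Subgroup.closure {x, y} := Subgroup.subset_closure (by simp)
  have hF' := hF ▸ cmt_mem hx hy
  rw [eq_top_iff, ← hgen, Subgroup.closure_le]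
  rintro g (rfl | rfl | rfl | rfl | rfl)
  exacts [hx, hy, hF', hH1 ▸ cmt_mem hF' hx, hH2 ▸ cmt_mem hF' hy]

end Commutator

lemma exists_section_of_subset_range {E G ι : Type*} [Group E] [Group G] [Finite ι]
    (π : E →* G) {S : Subgroup E} (hS : S.map π = ⊤) {w : ι → E}
    (hw : (S : Set E) ⊆ Set.range w) (hcard : Nat.card ι ≤ Nat.card G) :
    ∃ s : G →* E, ∀ g, π (s g) = g := by
  have hfin : (S : Set E).Finite := (Set.finite_range w).subset hw
  have : Finite S := hfin.to_subtype
  have hsurj : Function.Surjective (π.comp S.subtype) := by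
    rwa [← MonoidHom.range_eq_top, MonoidHom.range_comp, Subgroup.range_subtype]
  have hle : Nat.card S ≤ Nat.card G :=
    ((Nat.card_mono (Set.finite_range w) hw).trans (Finite.card_range_le w)).trans hcard
  let e := MulEquiv.ofBijective _ (hsurj.bijective_of_nat_card_le hle)
  exact ⟨S.subtype.comp e.symm.toMonoidHom, e.apply_symm_apply⟩

section Bicyclic

variable {G : Type*} [Group G]

lemma isBicyclic_sup {H K : Subgroup G} [IsCyclic H] [IsCyclic K]
    (hcomm : ∀ h ∈ H, ∀ k ∈ K, Commute h k) (hdisj : Disjoint H K) : IsBicyclic ↥(H ⊔ K) := by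
  set B := H.subgroupOf (H ⊔ K)
  set C := K.subgroupOf (H ⊔ K)
  have : IsCyclic B :=
    isCyclic_of_surjective _ (Subgroup.subgroupOfEquivOfLe le_sup_left).symm.surjective
  have : IsCyclic C :=
    isCyclic_of_surjective _ (Subgroup.subgroupOfEquivOfLe le_sup_right).symm.surjective
  have comm : ∀ (b : B) (c : C), Commute (B.subtype b) (C.subtype c) := fun b c =>
    Subtype.ext (hcomm _ b.2 _ c.2)
  have hinj : Function.Injective (B.subtype.noncommCoprod C.subtype comm) := by
    rw [MonoidHom.noncommCoprod_injective, Subgroup.range_subtype, Subgroup.range_subtype]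
    refine ⟨B.subtype_injective, C.subtype_injective, Subgroup.disjoint_def.mpr ?_⟩
    exact fun hb hc => Subtype.ext (Subgroup.disjoint_def.mp hdisj hb hc)
  have hsurj : Function.Surjective (B.subtype.noncommCoprod C.subtype comm) := by
    rw [← MonoidHom.range_eq_top, MonoidHom.noncommCoprod_range, Subgroup.range_subtype,
      Subgroup.range_subtype, ← codisjoint_iff]
    exact Subgroup.codisjoint_subgroupOf_sup H K
  exact Or.inr ⟨B, C, ‹_›, ‹_›, ⟨(MulEquiv.ofBijective _ ⟨hinj, hsurj⟩).symm⟩⟩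

lemma exists_isBicyclic_of_mem_center {p : ℕ} [Fact p.Prime] {z : G}
    (hz : z ∈ Subgroup.center G) (hzp : z ^ p = 1) (g : G) :
    ∃ A : Subgroup G, IsBicyclic A ∧ z ∈ A ∧ g ∈ A := by
  by_cases hzg : z ∈ Subgroup.zpowers g
  · exact ⟨_, Or.inl inferInstance, hzg, Subgroup.mem_zpowers g⟩
  refine ⟨_, isBicyclic_sup (H := Subgroup.zpowers g) (K := Subgroup.zpowers z) ?_ ?_,
    Subgroup.mem_sup_right (Subgroup.mem_zpowers z), Subgroup.mem_sup_left (Subgroup.mem_zpowers g)⟩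
  · intro h _ k hk
    exact Subgroup.mem_center_iff.mp (Subgroup.zpowers_le.mpr hz hk) h
  · have hz1 : z ≠ 1 := fun h => hzg (h ▸ Subgroup.one_mem _)
    have : Fact (Nat.card (Subgroup.zpowers z)).Prime := by
      rwa [Nat.card_zpowers, orderOf_eq_prime hzp hz1]
    rcases Subgroup.eq_bot_or_eq_top_of_prime_card
      ((Subgroup.zpowers g).subgroupOf (Subgroup.zpowers z)) with h | h
    · exact Subgroup.subgroupOf_eq_bot.mp h
    · exact absurd (Subgroup.subgroupOf_eq_top.mp h (Subgroup.mem_zpowers z)) hzg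

lemma RestrictsToCoboundaries.apply_comm {f : G → G → QZ} (hf : RestrictsToCoboundaries f)
    {A : Subgroup G} (hA : IsBicyclic A) {a b : G} (ha : a ∈ A) (hb : b ∈ A)
    (hab : Commute a b) : f a b = f b a := by
  obtain ⟨c, hc⟩ := hf A hA
  have hba : (⟨a, ha⟩ * ⟨b, hb⟩ : A) = ⟨b, hb⟩ * ⟨a, ha⟩ := Subtype.ext hab.eq
  have h₁ := hc ⟨a, ha⟩ ⟨b, hb⟩
  have h₂ := hc ⟨b, hb⟩ ⟨a, ha⟩
  rw [hba] at h₁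
  simp only at h₁ h₂
  rw [h₁, h₂, add_comm (c _)]

lemma RestrictsToCoboundaries.apply_comm_of_mem_center {f : G → G → QZ}
    (hf : RestrictsToCoboundaries f) {p : ℕ} [Fact p.Prime] {z : G}
    (hz : z ∈ Subgroup.center G) (hzp : z ^ p = 1) (g : G) : f z g = f g z := by
  obtain ⟨A, hA, hzA, hgA⟩ := exists_isBicyclic_of_mem_center hz hzp g
  exact hf.apply_comm hA hzA hgA (Subgroup.mem_center_iff.mp hz g).symm

end Bicyclic

section Collection

variable {K : Type*} [Group K]

lemma Nat.dvd_choose_two_of_odd {n : ℕ} (hn : Odd n) : n ∣ n.choose 2 := by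
  obtain ⟨k, rfl⟩ := hn
  refine ⟨k, ?_⟩
  rw [Nat.choose_two_right, Nat.add_sub_cancel, mul_left_comm, Nat.mul_div_cancel_left _ two_pos]

structure Phi6aRelations (p : ℕ) (X Y F H1 H2 : K) : Prop where
  cmt_X_Y : cmt X Y = F
  cmt_F_X : cmt F X = H1
  cmt_F_Y : cmt F Y = H2
  commute_H1 : ∀ k, Commute H1 k
  commute_H2 : ∀ k, Commute H2 k
  pow_X : X ^ p = H1
  pow_Y : Y ^ p = H2
  pow_F : F ^ p = 1
  pow_H1 : H1 ^ p = 1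
  pow_H2 : H2 ^ p = 1

lemma phi6aRelations_of_pow {p : ℕ} (hp : Odd p) {X Y : K}
    (hX : X ^ p = cmt (cmt X Y) X) (hY : Y ^ p = cmt (cmt X Y) Y)
    (h1 : ∀ k, Commute (cmt (cmt X Y) X) k) (h2 : ∀ k, Commute (cmt (cmt X Y) Y) k) :
    Phi6aRelations p X Y (cmt X Y) (cmt (cmt X Y) X) (cmt (cmt X Y) Y) := by
  have pow_H1 : cmt (cmt X Y) X ^ p = 1 := by
    rw [← cmt_pow_right h1, hX, cmt_eq_one_of_commute (h1 _).symm]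
  have pow_H2 : cmt (cmt X Y) Y ^ p = 1 := by
    rw [← cmt_pow_right h2, hY, cmt_eq_one_of_commute (h2 _).symm]
  have pow_F : cmt X Y ^ p = 1 := by
    have h := cmt_pow_left h1 p
    obtain ⟨k, hk⟩ := Nat.dvd_choose_two_of_odd hp
    rwa [hX, cmt_eq_one_of_commute (h1 Y), hk, pow_mul, pow_H1, one_pow, mul_one, eq_comm] at h
  exact ⟨rfl, rfl, rfl, h1, h2, hX, hY, pow_F, pow_H1, pow_H2⟩

-- With `Y` to the left of `X`, right multiplication by `X` or `Y` only creates nonnegative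
-- powers (see `pow_X_mul_Y`), so all exponents stay in `ℕ`.
def collectedWord (X Y F H1 H2 : K) (a b c d e : ℕ) : K :=
  Y ^ b * X ^ a * F ^ c * (H1 ^ d * H2 ^ e)

namespace Phi6aRelations

variable {p : ℕ} {X Y F H1 H2 : K} (R : Phi6aRelations p X Y F H1 H2)
include R

lemma pow_F_mul_X (c : ℕ) : F ^ c * X = X * F ^ c * H1 ^ c := by
  rw [mul_eq_mul_mul_cmt, cmt_pow_left_of_central (R.cmt_F_X ▸ R.commute_H1), R.cmt_F_X]

lemma pow_F_mul_Y (c : ℕ) : F ^ c * Y = Y * F ^ c * H2 ^ c := by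
  rw [mul_eq_mul_mul_cmt, cmt_pow_left_of_central (R.cmt_F_Y ▸ R.commute_H2), R.cmt_F_Y]

lemma pow_X_mul_Y (a : ℕ) : X ^ a * Y = Y * X ^ a * F ^ a * H1 ^ a.choose 2 := by
  have h : ∀ k, Commute (cmt (cmt X Y) X) k := by rw [R.cmt_X_Y, R.cmt_F_X]; exact R.commute_H1
  rw [mul_eq_mul_mul_cmt, cmt_pow_left h, R.cmt_X_Y, R.cmt_F_X, ← mul_assoc]

lemma collectedWord_mul_X (a b c d e : ℕ) :
    collectedWord X Y F H1 H2 a b c d e * X = collectedWord X Y F H1 H2 (a + 1) b c (c + d) e := by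
  have hZ : ∀ k, Commute (H1 ^ d * H2 ^ e) k := fun k =>
    ((R.commute_H1 k).pow_left d).mul_left ((R.commute_H2 k).pow_left e)
  rw [collectedWord, (hZ X).right_comm, mul_assoc _ (F ^ c), R.pow_F_mul_X, collectedWord]
  group

lemma collectedWord_mul_Y (a b c d e : ℕ) :
    collectedWord X Y F H1 H2 a b c d e * Y
      = collectedWord X Y F H1 H2 a (b + 1) (a + c) (a.choose 2 + d) (c + e) := by
  have hZ : ∀ k, Commute (H1 ^ d * H2 ^ e) k := fun k =>
    ((R.commute_H1 k).pow_left d).mul_left ((R.commute_H2 k).pow_left e)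
  rw [collectedWord, (hZ Y).right_comm, mul_assoc _ (F ^ c), R.pow_F_mul_Y]
  simp only [mul_assoc]
  rw [← mul_assoc (X ^ a) Y, R.pow_X_mul_Y, collectedWord]
  simp only [mul_assoc, ((R.commute_H1 _).pow_left (a.choose 2)).left_comm]
  simp only [((R.commute_H2 _).pow_left c).left_comm]
  group

lemma pow_X_eq (a : ℕ) : X ^ a = H1 ^ (a / p) * X ^ (a % p) := by
  rw [← R.pow_X, ← pow_mul, ← pow_add, Nat.div_add_mod]

lemma pow_Y_eq (b : ℕ) : Y ^ b = H2 ^ (b / p) * Y ^ (b % p) := by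
  rw [← R.pow_Y, ← pow_mul, ← pow_add, Nat.div_add_mod]

lemma collectedWord_eq_mod (a b c d e : ℕ) :
    collectedWord X Y F H1 H2 a b c d e
      = collectedWord X Y F H1 H2 (a % p) (b % p) (c % p) ((a / p + d) % p) ((b / p + e) % p) := by
  rw [collectedWord, collectedWord, R.pow_X_eq a, R.pow_Y_eq b, pow_eq_pow_mod c R.pow_F,
    ← pow_eq_pow_mod _ R.pow_H1, ← pow_eq_pow_mod _ R.pow_H2]
  simp only [mul_assoc, ((R.commute_H1 _).pow_left (a / p)).left_comm]
  simp only [((R.commute_H2 _).pow_left (b / p)).left_comm]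
  group

lemma closure_subset_range (hp : 0 < p) :
    (Subgroup.closure {X, Y} : Set K) ⊆ Set.range fun v : Fin 5 → Fin p =>
      collectedWord X Y F H1 H2 (v 0) (v 1) (v 2) (v 3) (v 4) := by
  have hfin : ∀ x ∈ ({X, Y} : Set K), IsOfFinOrder x := by
    rintro x (rfl | rfl) <;> refine isOfFinOrder_iff_pow_eq_one.mpr ⟨p * p, by positivity, ?_⟩
    · rw [pow_mul, R.pow_X, R.pow_H1]
    · rw [pow_mul, R.pow_Y, R.pow_H2]
  intro g hg
  rw [SetLike.mem_coe, ← Subgroup.mem_toSubmonoid,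
    Subgroup.closure_toSubmonoid_of_isOfFinOrder hfin] at hg
  obtain ⟨a, b, c, d, e, rfl⟩ : ∃ a b c d e, collectedWord X Y F H1 H2 a b c d e = g := by
    induction hg using Submonoid.closure_induction_right with
    | one => exact ⟨0, 0, 0, 0, 0, by simp [collectedWord]⟩
    | mul_right x _ y hy ih =>
      obtain ⟨a, b, c, d, e, rfl⟩ := ih
      rcases hy with rfl | rfl
      · exact ⟨_, _, _, _, _, (R.collectedWord_mul_X a b c d e).symm⟩
      · exact ⟨_, _, _, _, _, (R.collectedWord_mul_Y a b c d e).symm⟩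
  refine ⟨![⟨a % p, Nat.mod_lt _ hp⟩, ⟨b % p, Nat.mod_lt _ hp⟩, ⟨c % p, Nat.mod_lt _ hp⟩,
    ⟨(a / p + d) % p, Nat.mod_lt _ hp⟩, ⟨(b / p + e) % p, Nat.mod_lt _ hp⟩], ?_⟩
  simp [R.collectedWord_eq_mod a b c d e]

end Phi6aRelations

end Collection

section Cocycle

variable {G : Type*} [Group G] {f : G → G → QZ}

lemma IsGrpCocycle.apply_one_left (hf : IsGrpCocycle f) (g : G) : f 1 g = f 1 1 := by
  simpa using (hf 1 1 g).symm

lemma IsGrpCocycle.apply_one_right (hf : IsGrpCocycle f) (g : G) : f g 1 = f 1 1 := by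
  simpa [add_comm] using hf g 1 1

lemma IsGrpCocycle.apply_inv_left (hf : IsGrpCocycle f) (g : G) : f g⁻¹ g = f g g⁻¹ := by
  simpa [hf.apply_one_left, hf.apply_one_right] using (hf g g⁻¹ g).symm

end Cocycle

section Extension

variable {G : Type*} [Group G]

@[ext]
structure CocycleExt (f : cocycles2 G) where
  fst : QZ
  snd : G

namespace CocycleExt

variable {f : cocycles2 G}

instance : Group (CocycleExt f) where
  mul x y := ⟨x.fst + y.fst + f.1 x.snd y.snd, x.snd * y.snd⟩
  one := ⟨-f.1 1 1, 1⟩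
  inv x := ⟨-f.1 1 1 - x.fst - f.1 x.snd x.snd⁻¹, x.snd⁻¹⟩
  mul_assoc a b c := by
    ext
    · change a.fst + b.fst + f.1 a.snd b.snd + c.fst + f.1 (a.snd * b.snd) c.snd
        = a.fst + (b.fst + c.fst + f.1 b.snd c.snd) + f.1 a.snd (b.snd * c.snd)
      calc _ = a.fst + b.fst + c.fst + (f.1 a.snd b.snd + f.1 (a.snd * b.snd) c.snd) := by abel
        _ = _ := by rw [f.2 a.snd b.snd c.snd]; abel
    · exact mul_assoc _ _ _
  one_mul a := by
    ext
    · change -f.1 1 1 + a.fst + f.1 1 a.snd = a.fst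
      rw [f.2.apply_one_left a.snd]; abel
    · exact one_mul _
  mul_one a := by
    ext
    · change a.fst + -f.1 1 1 + f.1 a.snd 1 = a.fst
      rw [f.2.apply_one_right a.snd]; abel
    · exact mul_one _
  inv_mul_cancel a := by
    ext
    · change -f.1 1 1 - a.fst - f.1 a.snd a.snd⁻¹ + a.fst + f.1 a.snd⁻¹ a.snd = -f.1 1 1
      rw [f.2.apply_inv_left]; abel
    · exact inv_mul_cancel _

@[simp]
lemma fst_one : (1 : CocycleExt f).fst = -f.1 1 1 := rfl

@[simp]
lemma snd_one : (1 : CocycleExt f).snd = 1 := rfl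

@[simp]
lemma fst_mul (x y : CocycleExt f) : (x * y).fst = x.fst + y.fst + f.1 x.snd y.snd := rfl

@[simp]
lemma snd_mul (x y : CocycleExt f) : (x * y).snd = x.snd * y.snd := rfl

def proj : CocycleExt f →* G where
  toFun := snd
  map_one' := rfl
  map_mul' _ _ := rfl

@[simp]
lemma proj_apply (x : CocycleExt f) : proj x = x.snd := rfl

-- Shifted by `f 1 1` because the cocycle is not assumed normalized: `1 = (-f 1 1, 1)`.
def ofQZ : Multiplicative QZ →* CocycleExt f where
  toFun q := ⟨q.toAdd - f.1 1 1, 1⟩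
  map_one' := by ext <;> simp
  map_mul' q r := by
    ext
    · simp only [toAdd_mul, fst_mul]; abel
    · simp

lemma commute_of_snd_mem_center {w : CocycleExt f} (hw : w.snd ∈ Subgroup.center G)
    (hsym : ∀ g, f.1 w.snd g = f.1 g w.snd) (k : CocycleExt f) : Commute w k := by
  refine CocycleExt.ext ?_ ?_
  · change w.fst + k.fst + f.1 w.snd k.snd = k.fst + w.fst + f.1 k.snd w.snd
    rw [hsym]; abel
  · exact (Subgroup.mem_center_iff.mp hw k.snd).symm

lemma exists_central_pow_eq {n : ℕ} (hn : n ≠ 0) {w : CocycleExt f} (hw : w.snd = 1) :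
    ∃ z : CocycleExt f, z.snd = 1 ∧ (∀ k, Commute z k) ∧ z ^ n = w := by
  obtain ⟨q, hq⟩ : ∃ q : QZ, n • q = w.fst + f.1 1 1 :=
    ⟨DivisibleBy.div _ (n : ℤ), by rw [← natCast_zsmul]; exact DivisibleBy.div_cancel _ (by simpa)⟩
  refine ⟨ofQZ (Multiplicative.ofAdd q), rfl, commute_of_snd_mem_center (Subgroup.one_mem _)
    fun g => (f.2.apply_one_left g).trans (f.2.apply_one_right g).symm, ?_⟩
  rw [← map_pow, ← ofAdd_nsmul, hq]
  exact CocycleExt.ext (by simp [ofQZ]) hw.symm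

lemma exists_central_mul_pow_eq {n : ℕ} (hn : n ≠ 0) {x t : CocycleExt f}
    (ht : t.snd = x.snd ^ n) :
    ∃ z : CocycleExt f, z.snd = 1 ∧ (∀ k, Commute z k) ∧ (z * x) ^ n = t := by
  have hw : (t * (x ^ n)⁻¹).snd = 1 := by
    change proj (t * (x ^ n)⁻¹) = 1
    rw [map_mul, map_inv, map_pow, proj_apply, proj_apply, ht, mul_inv_cancel]
  obtain ⟨z, hz1, hzc, hzn⟩ := exists_central_pow_eq hn hw
  exact ⟨z, hz1, hzc, by rw [(hzc x).mul_pow, hzn, inv_mul_cancel_right]⟩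

lemma isGrpCoboundary_of_section (s : G →* CocycleExt f) (hs : ∀ g, (s g).snd = g) :
    IsGrpCoboundary f.1 := by
  refine ⟨fun g => -(s g).fst, fun g h => ?_⟩
  have hmul := congrArg CocycleExt.fst (map_mul s g h)
  rw [fst_mul, hs, hs] at hmul
  change f.1 g h = -(s g).fst + -(s h).fst - -(s (g * h)).fst
  rw [hmul]; abel

lemma exists_phi6aRelations_lift {p : ℕ} (hp : Odd p) {x y F H1 H2 : G}
    (hF : cmt x y = F) (hH1 : cmt F x = H1) (hH2 : cmt F y = H2)
    (hH1c : H1 ∈ Subgroup.center G) (hH2c : H2 ∈ Subgroup.center G)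
    (hsym1 : ∀ g, f.1 H1 g = f.1 g H1) (hsym2 : ∀ g, f.1 H2 g = f.1 g H2)
    (hx : x ^ p = H1) (hy : y ^ p = H2) :
    ∃ X Y : CocycleExt f, X.snd = x ∧ Y.snd = y ∧
      Phi6aRelations p X Y (cmt X Y) (cmt (cmt X Y) X) (cmt (cmt X Y) Y) := by
  let x₀ : CocycleExt f := ⟨0, x⟩
  let y₀ : CocycleExt f := ⟨0, y⟩
  have hsnd : ∀ a b : CocycleExt f, (cmt a b).snd = cmt a.snd b.snd := map_cmt proj
  have hH1' : (cmt (cmt x₀ y₀) x₀).snd = H1 := by rw [hsnd, hsnd, ← hH1, ← hF]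
  have hH2' : (cmt (cmt x₀ y₀) y₀).snd = H2 := by rw [hsnd, hsnd, ← hH2, ← hF]
  obtain ⟨z₁, hz₁, hz₁c, hX⟩ := exists_central_mul_pow_eq hp.pos.ne' (x := x₀)
    (t := cmt (cmt x₀ y₀) x₀) (by rw [hH1', ← hx])
  obtain ⟨z₂, hz₂, hz₂c, hY⟩ := exists_central_mul_pow_eq hp.pos.ne' (x := y₀)
    (t := cmt (cmt x₀ y₀) y₀) (by rw [hH2', ← hy])
  have hXY : cmt (z₁ * x₀) (z₂ * y₀) = cmt x₀ y₀ := by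
    rw [cmt_mul_left_of_central hz₁c, cmt_mul_right_of_central hz₂c]
  refine ⟨z₁ * x₀, z₂ * y₀, by simp [hz₁, x₀], by simp [hz₂, y₀], ?_⟩
  have hH1X : cmt (cmt (z₁ * x₀) (z₂ * y₀)) (z₁ * x₀) = cmt (cmt x₀ y₀) x₀ := by
    rw [hXY, cmt_mul_right_of_central hz₁c]
  have hH2Y : cmt (cmt (z₁ * x₀) (z₂ * y₀)) (z₂ * y₀) = cmt (cmt x₀ y₀) y₀ := by
    rw [hXY, cmt_mul_right_of_central hz₂c]
  refine phi6aRelations_of_pow hp (by rw [hX, hH1X]) (by rw [hY, hH2Y]) ?_ ?_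
  · rw [hH1X]; exact commute_of_snd_mem_center (hH1' ▸ hH1c) (hH1' ▸ hsym1)
  · rw [hH2Y]; exact commute_of_snd_mem_center (hH2' ▸ hH2c) (hH2' ▸ hsym2)

end CocycleExt

end Extension

theorem B0_phi6a_eq_bot_general (p : ℕ) (hp : p.Prime) (hodd : Odd p)
    (G : Type) [Group G] (hcard : Nat.card G = p ^ 5)
    (f1 f2 f0 h1 h2 : G)
    (hgen : Subgroup.closure {f1, f2, f0, h1, h2} = ⊤)
    (hcen : Subgroup.closure {h1, h2} = Subgroup.center G)
    (r1 : cmt f1 f2 = f0) (r2 : cmt f0 f1 = h1) (r3 : cmt f0 f2 = h2)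
    (r5 : h1 ^ p = 1) (r6 : h2 ^ p = 1)
    (r7 : f1 ^ p = h1) (r8 : f2 ^ p = h2) :
    B0 G = ⊥ := by
  have : Fact p.Prime := ⟨hp⟩
  have h1c : h1 ∈ Subgroup.center G := hcen ▸ Subgroup.subset_closure (by simp)
  have h2c : h2 ∈ Subgroup.center G := hcen ▸ Subgroup.subset_closure (by simp)
  rw [eq_bot_iff]
  rintro _ ⟨f, rfl, hf⟩
  rw [AddSubgroup.mem_bot, QuotientAddGroup.eq_zero_iff]
  obtain ⟨X, Y, hX, hY, R⟩ := CocycleExt.exists_phi6aRelations_lift (f := f) hodd r1 r2 r3 h1c h2c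
    (hf.apply_comm_of_mem_center h1c r5) (hf.apply_comm_of_mem_center h2c r6) r7 r8
  have hS : (Subgroup.closure {X, Y}).map CocycleExt.proj = ⊤ := by
    rw [MonoidHom.map_closure, Set.image_pair, CocycleExt.proj_apply, CocycleExt.proj_apply, hX,
      hY, closure_pair_eq_top_of_cmt hgen r1 r2 r3]
  obtain ⟨s, hs⟩ := exists_section_of_subset_range CocycleExt.proj hS
    (R.closure_subset_range hp.pos) (by simp [hcard])
  exact CocycleExt.isGrpCoboundary_of_section s hs

/-- Let `p` be an odd prime and `G` the group `Φ₆(221)a` of order `p⁵`: generated by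
`f1, f2, f0, h1, h2` with `Z(G) = ⟨h1, h2⟩` and relations `[f1,f2] = f0`, `[f0,f1] = h1`,
`[f0,f2] = h2`, `f0^p = h1^p = h2^p = 1`, `f1^p = h1`, `f2^p = h2`. Then `B₀(G) = 0`. -/
theorem B0_phi6a_eq_bot (p : ℕ) (hp : p.Prime) (hodd : Odd p)
    (G : Type) [Group G] [Finite G] (hcard : Nat.card G = p ^ 5)
    (f1 f2 f0 h1 h2 : G)
    (hgen : Subgroup.closure {f1, f2, f0, h1, h2} = ⊤)
    (hcen : Subgroup.closure {h1, h2} = Subgroup.center G)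
    (r1 : cmt f1 f2 = f0) (r2 : cmt f0 f1 = h1) (r3 : cmt f0 f2 = h2)
    (r4 : f0 ^ p = 1) (r5 : h1 ^ p = 1) (r6 : h2 ^ p = 1)
    (r7 : f1 ^ p = h1) (r8 : f2 ^ p = h2) :
    B0 G = ⊥ :=
  B0_phi6a_eq_bot_general p hp hodd G hcard f1 f2 f0 h1 h2 hgen hcen r1 r2 r3 r5 r6 r7 r8
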